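/- arXiv:1712.09472 — 4 statements merged into one kernel-verified Lean document; each statement's English description precedes it below -/
import Mathlib

section
/- Let p be a polynomial of degree at most N with p = ∑_{i=0}^N p(ξ_i) h_i. Then its derivative satisfies p' = ∑_{i=1}^N (p(ξ_i) - p(ξ_{i-1})) e_i, where e_i are the edge polynomials. -/
open Polynomial

/-- The derivative of a nodal expansion is the edge expansion of the differences
of the nodal degrees of freedom. -/
theorem deriv_nodal_expansion (N : ℕ) (ξ : Fin (N + 1) → ℝ) (hξ : StrictMono ξ)
    (h : Fin (N + 1) → Polynomial ℝ)
    (hdeg : ∀ k, (h k).degree ≤ N)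
    (hL : ∀ k i, (h k).eval (ξ i) = if k = i then 1 else 0)
    (e : Fin N → Polynomial ℝ)
    (he : ∀ j : Fin N,
      e j = -∑ k : Fin (N + 1), if (k : ℕ) ≤ (j : ℕ) then Polynomial.derivative (h k) else 0)
    (p : Polynomial ℝ) (hpdeg : p.degree ≤ N)
    (hp : p = ∑ i : Fin (N + 1), Polynomial.C (p.eval (ξ i)) * h i) :
    Polynomial.derivative p
      = ∑ i : Fin N, Polynomial.C (p.eval (ξ i.succ) - p.eval (ξ i.castSucc)) * e i := by
  classical
  -- Step 1: the derivatives of the h k sum to zero.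
  have hone : (∑ k : Fin (N + 1), h k) = C 1 := by
    have hz : ((∑ k : Fin (N + 1), h k) - C 1) = 0 := by
      apply Polynomial.eq_zero_of_natDegree_lt_card_of_eval_eq_zero _ hξ.injective
      · intro i
        simp [Polynomial.eval_finset_sum, hL]
      · have hdle : ((∑ k : Fin (N + 1), h k) - C 1).degree ≤ (N : WithBot ℕ) := by
          refine (Polynomial.degree_sub_le _ _).trans (max_le ?_ ?_)
          · exact (Polynomial.degree_sum_le _ _).trans (Finset.sup_le fun k _ => hdeg k)
          · exact Polynomial.degree_C_le.trans (by exact_mod_cast Nat.zero_le N)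
        have := Polynomial.natDegree_le_iff_degree_le.mpr hdle
        simpa [Fintype.card_fin] using Nat.lt_succ_of_le this
    exact sub_eq_zero.mp hz
  have hDsum : (∑ k : Fin (N + 1), Polynomial.derivative (h k)) = 0 := by
    have := congrArg (Polynomial.derivative (R := ℝ)) hone
    simpa [map_sum] using this
  -- Step 2: telescoping sums.
  set F : ℕ → ℝ := fun n => open Fin.NatCast in p.eval (ξ (n : Fin (N + 1))) with hF
  have htel : ∀ k : Fin (N + 1),
      (∑ j : Fin N, if (k : ℕ) ≤ (j : ℕ)
          then p.eval (ξ j.succ) - p.eval (ξ j.castSucc) else 0)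
        = p.eval (ξ (Fin.last N)) - p.eval (ξ k) := by
    intro k
    have hcast : ∀ j : Fin N,
        (if (k : ℕ) ≤ (j : ℕ) then p.eval (ξ j.succ) - p.eval (ξ j.castSucc) else 0)
          = F (max ((j : ℕ) + 1) k) - F (max (j : ℕ) k) := by
      intro j
      have h1 : F ((j : ℕ) + 1) = p.eval (ξ j.succ) := by
        have : open Fin.NatCast in (((j : ℕ) + 1 : ℕ) : Fin (N + 1)) = j.succ := by
          have := Fin.cast_val_eq_self (j.succ)
          simpa using this
        simp [hF, this]
      have h2 : F (j : ℕ) = p.eval (ξ j.castSucc) := by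
        have : open Fin.NatCast in (((j : ℕ) : ℕ) : Fin (N + 1)) = j.castSucc := by
          have := Fin.cast_val_eq_self (j.castSucc)
          simpa using this
        simp [hF, this]
      rcases le_or_gt (k : ℕ) (j : ℕ) with hle | hlt
      · rw [if_pos hle, max_eq_left (Nat.le_succ_of_le hle), max_eq_left hle, h1, h2]
      · rw [if_neg (not_le.mpr hlt)]
        rw [max_eq_right (Nat.succ_le_of_lt hlt), max_eq_right hlt.le, sub_self]
    rw [Finset.sum_congr rfl (fun j _ => hcast j)]
    have := Finset.sum_range_sub (fun n => F (max n (k : ℕ))) N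
    have hsum : (∑ j : Fin N, (F (max ((j : ℕ) + 1) (k : ℕ)) - F (max (j : ℕ) (k : ℕ))))
        = F (max N (k : ℕ)) - F (max 0 (k : ℕ)) := by
      rw [Fin.sum_univ_eq_sum_range (fun n => F (max (n + 1) (k : ℕ)) - F (max n (k : ℕ))) N]
      exact this
    rw [hsum]
    have hkN : (k : ℕ) ≤ N := Nat.lt_succ_iff.mp k.isLt
    rw [max_eq_left hkN, Nat.max_eq_right (Nat.zero_le _)]
    have hFN : F N = p.eval (ξ (Fin.last N)) := by
      have : open Fin.NatCast in ((N : ℕ) : Fin (N + 1)) = Fin.last N := by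
        have := Fin.cast_val_eq_self (Fin.last N)
        simpa using this
      simp [hF, this]
    have hFk : F (k : ℕ) = p.eval (ξ k) := by
      simp [hF, Fin.cast_val_eq_self]
    rw [hFN, hFk]
  -- Step 3: main computation.
  have hLHS : Polynomial.derivative p
      = ∑ k : Fin (N + 1), C (p.eval (ξ k)) * Polynomial.derivative (h k) := by
    conv_lhs => rw [hp]
    simp [map_sum, Polynomial.derivative_mul]
  rw [hLHS]
  have hRHS : (∑ i : Fin N, C (p.eval (ξ i.succ) - p.eval (ξ i.castSucc)) * e i)
      = ∑ k : Fin (N + 1),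
          C (p.eval (ξ k) - p.eval (ξ (Fin.last N))) * Polynomial.derivative (h k) := by
    calc (∑ i : Fin N, C (p.eval (ξ i.succ) - p.eval (ξ i.castSucc)) * e i)
        = ∑ i : Fin N, ∑ k : Fin (N + 1),
            (if (k : ℕ) ≤ (i : ℕ)
              then -(C (p.eval (ξ i.succ) - p.eval (ξ i.castSucc)) * Polynomial.derivative (h k))
              else 0) := by
          refine Finset.sum_congr rfl fun i _ => ?_
          rw [he i, mul_neg, Finset.mul_sum, ← Finset.sum_neg_distrib]
          refine Finset.sum_congr rfl fun k _ => ?_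
          split <;> simp
      _ = ∑ k : Fin (N + 1), ∑ i : Fin N,
            (if (k : ℕ) ≤ (i : ℕ)
              then -(C (p.eval (ξ i.succ) - p.eval (ξ i.castSucc)) * Polynomial.derivative (h k))
              else 0) := Finset.sum_comm
      _ = ∑ k : Fin (N + 1),
            -(C (∑ i : Fin N, if (k : ℕ) ≤ (i : ℕ)
                then p.eval (ξ i.succ) - p.eval (ξ i.castSucc) else 0)
              * Polynomial.derivative (h k)) := by
          refine Finset.sum_congr rfl fun k _ => ?_
          rw [map_sum, Finset.sum_mul, ← Finset.sum_neg_distrib]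
          refine Finset.sum_congr rfl fun i _ => ?_
          split <;> simp
      _ = ∑ k : Fin (N + 1),
            C (p.eval (ξ k) - p.eval (ξ (Fin.last N))) * Polynomial.derivative (h k) := by
          refine Finset.sum_congr rfl fun k _ => ?_
          rw [htel k, map_sub, map_sub]
          ring
  rw [hRHS]
  have hsplit : ∀ k : Fin (N + 1),
      C (p.eval (ξ k) - p.eval (ξ (Fin.last N))) * Polynomial.derivative (h k)
        = C (p.eval (ξ k)) * Polynomial.derivative (h k)
          - C (p.eval (ξ (Fin.last N))) * Polynomial.derivative (h k) := fun k => by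
    rw [map_sub, sub_mul]
  rw [Finset.sum_congr rfl fun k _ => hsplit k, Finset.sum_sub_distrib, ← Finset.mul_sum,
    hDsum, mul_zero, sub_zero]
end

section
/- The edge polynomials e_1,…,e_N form a basis of the space of polynomials of degree at most N-1. -/
open Polynomial

/-- The edge polynomials form a basis of the space of polynomials of degree at most `N-1`. -/
theorem edge_polynomials_basis (N : ℕ) (ξ : Fin (N + 1) → ℝ) (hξ : StrictMono ξ)
    (h : Fin (N + 1) → Polynomial ℝ)
    (hdeg : ∀ k, (h k).degree ≤ N)
    (hL : ∀ k i, (h k).eval (ξ i) = if k = i then 1 else 0)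
    (e : Fin N → Polynomial ℝ)
    (he : ∀ j : Fin N,
      e j = -∑ k : Fin (N + 1), if (k : ℕ) ≤ (j : ℕ) then Polynomial.derivative (h k) else 0) :
    ∃ b : Module.Basis (Fin N) ℝ (Polynomial.degreeLT ℝ N), ∀ j, (b j : Polynomial ℝ) = e j := by
  have hne : ∀ k : Fin (N + 1), h k ≠ 0 := by
    intro k hk
    have := hL k k
    simp [hk] at this
  have hdlt : ∀ k, (derivative (h k)).degree < (N : ℕ) := fun k =>
    lt_of_lt_of_le (degree_derivative_lt (hne k)) (hdeg k)
  have hmem : ∀ j, e j ∈ degreeLT ℝ N := by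
    intro j
    rw [mem_degreeLT, he j, degree_neg]
    refine lt_of_le_of_lt (degree_sum_le _ _) ?_
    rw [Finset.sup_lt_iff (by exact WithBot.bot_lt_coe N)]
    intro k _
    split
    · exact hdlt k
    · simp only [degree_zero]
      exact WithBot.bot_lt_coe N
  set f : Fin N → degreeLT ℝ N := fun j => ⟨e j, hmem j⟩ with hf
  have hli : LinearIndependent ℝ f := by
    rw [Fintype.linearIndependent_iff]
    intro c hc i
    have hc' : ∑ j, c j • e j = 0 := by
      have := congrArg (fun x : degreeLT ℝ N => (x : Polynomial ℝ)) hc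
      simpa [hf] using this
    -- the "partial sum" polynomial P
    set P : Polynomial ℝ :=
      ∑ j : Fin N, c j • (∑ k : Fin (N + 1), if (k : ℕ) ≤ (j : ℕ) then h k else 0) with hP
    have hdP : derivative P = 0 := by
      rw [hP, map_sum]
      have hterm : ∀ j : Fin N,
          derivative (c j • (∑ k : Fin (N + 1), if (k : ℕ) ≤ (j : ℕ) then h k else 0))
            = c j • (-(e j)) := by
        intro j
        rw [derivative_smul, map_sum, he j, neg_neg]
        congr 1
        refine Finset.sum_congr rfl fun k _ => ?_
        rw [apply_ite derivative, derivative_zero]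
      rw [Finset.sum_congr rfl (fun j _ => hterm j)]
      simp only [smul_neg, Finset.sum_neg_distrib, hc', neg_zero]
    have hPC : P = C (P.coeff 0) :=
      eq_C_of_natDegree_eq_zero (natDegree_eq_zero_of_derivative_eq_zero hdP)
    -- evaluation of P at the nodes
    set T : Fin (N + 1) → ℝ := fun i => ∑ j : Fin N, if (i : ℕ) ≤ (j : ℕ) then c j else 0 with hT
    have hevalT : ∀ i : Fin (N + 1), P.eval (ξ i) = T i := by
      intro i
      rw [hP, hT, eval_finset_sum]
      refine Finset.sum_congr rfl fun j _ => ?_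
      rw [eval_smul, eval_finset_sum, smul_eq_mul]
      have inner : ∀ k : Fin (N + 1),
          ((if (k : ℕ) ≤ (j : ℕ) then h k else 0).eval (ξ i))
            = if k = i then (if (i : ℕ) ≤ (j : ℕ) then (1 : ℝ) else 0) else 0 := by
        intro k
        by_cases hk : k = i
        · subst hk
          by_cases hkj : (k : ℕ) ≤ (j : ℕ) <;> simp [hkj, hL]
        · by_cases hkj : (k : ℕ) ≤ (j : ℕ) <;> simp [hkj, hL, hk]
      rw [Finset.sum_congr rfl fun k _ => inner k, Finset.sum_ite_eq' Finset.univ i]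
      simp only [Finset.mem_univ, if_true]
      by_cases hij : (i : ℕ) ≤ (j : ℕ) <;> simp [hij]
    have hTconst : ∀ i : Fin (N + 1), T i = P.coeff 0 := by
      intro i
      rw [← hevalT i]
      conv_lhs => rw [hPC]
      simp
    have hTlast : T (Fin.last N) = 0 := by
      rw [hT]
      refine Finset.sum_eq_zero fun j _ => ?_
      have : ¬ ((Fin.last N : ℕ) ≤ (j : ℕ)) := by
        simp only [Fin.val_last, not_le]
        exact j.isLt
      simp [this]
    have hT0 : ∀ i : Fin (N + 1), T i = 0 := fun i => by
      rw [hTconst i, ← hTconst (Fin.last N), hTlast]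
    -- extract c i
    have key : ∀ j : Fin N,
        (if ((i.castSucc : Fin (N + 1)) : ℕ) ≤ (j : ℕ) then c j else 0)
          - (if ((i.succ : Fin (N + 1)) : ℕ) ≤ (j : ℕ) then c j else 0)
          = if j = i then c j else 0 := by
      intro j
      simp only [Fin.coe_castSucc, Fin.val_succ]
      by_cases hji : j = i
      · subst hji
        simp
      · have hne' : (j : ℕ) ≠ (i : ℕ) := fun hh => hji (Fin.ext hh)
        by_cases h1 : (i : ℕ) ≤ (j : ℕ)
        · have h2 : (i : ℕ) + 1 ≤ (j : ℕ) := by omega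
          simp [h1, h2, hji]
        · have h2 : ¬ ((i : ℕ) + 1 ≤ (j : ℕ)) := by omega
          simp [h1, h2, hji]
    have : c i = T i.castSucc - T i.succ := by
      rw [hT, ← Finset.sum_sub_distrib, Finset.sum_congr rfl fun j _ => key j,
        Finset.sum_ite_eq' Finset.univ i]
      simp
    rw [this, hT0, hT0, sub_zero]
  have hcard : Fintype.card (Fin N) = Module.finrank ℝ (degreeLT ℝ N) := by
    rw [Fintype.card_fin, (degreeLTEquiv ℝ N).finrank_eq, Module.finrank_fin_fun]
  rcases Nat.eq_zero_or_pos N with hN | hN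
  · subst hN
    haveI : Subsingleton (degreeLT ℝ 0) := (degreeLTEquiv ℝ 0).toEquiv.subsingleton
    refine ⟨Module.Basis.empty _, fun j => Fin.elim0 j⟩
  · have : Nonempty (Fin N) := ⟨⟨0, hN⟩⟩
    have : FiniteDimensional ℝ (degreeLT ℝ N) :=
      Module.Finite.equiv (degreeLTEquiv ℝ N).symm
    refine ⟨basisOfLinearIndependentOfCardEqFinrank hli hcard, fun j => ?_⟩
    rw [coe_basisOfLinearIndependentOfCardEqFinrank]
end

section
/- For a vector field q^h in the 2D tensor-product space D^h(K) expanded as q^h = (∑_{i=0}^N ∑_{j=1}^N u_{ij} h_i(ξ) e_j(η), ∑_{i=1}^N ∑_{j=0}^N v_{ij} e_i(ξ) h_j(η)), the divergence is div q^h = ∑_{i=1}^N ∑_{j=1}^N (u_{i,j} - u_{i-1,j} + v_{i,j} - v_{i,j-1}) e_i(ξ) e_j(η), with the conventions u_{0,j} etc. interpreted via the index ranges. -/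
open Polynomial

lemma telescoping_key {N : ℕ} (c : Fin (N + 1) → ℝ) (f : Fin (N + 2) → ℝ)
    (h0 : f 0 = 0) (hN : f (Fin.last (N + 1)) = 0) :
    ∑ i : Fin (N + 1), c i * (f i.castSucc - f i.succ)
      = ∑ i : Fin N, (c i.succ - c i.castSucc) * f i.succ.castSucc := by
  simp only [mul_sub, sub_mul, Finset.sum_sub_distrib]
  rw [Fin.sum_univ_succ (fun i : Fin (N + 1) => c i * f i.castSucc),
      Fin.sum_univ_castSucc (fun i : Fin (N + 1) => c i * f i.succ)]
  have h1 : ((0 : Fin (N + 1)).castSucc : Fin (N + 2)) = 0 := rfl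
  have h2 : (Fin.last N).succ = Fin.last (N + 1) := rfl
  simp only [h1, h0, h2, hN, mul_zero, add_zero, zero_add, Fin.succ_castSucc]

/-- The divergence of a vector field in the tensor-product space `D^h(K)`
is the surface expansion of the incidence-matrix differences of the edge
degrees of freedom. -/
theorem discrete_divergence_expansion (N : ℕ)
    (h : Fin (N + 1) → Polynomial ℝ)
    (e : Fin (N + 2) → Polynomial ℝ)
    (he0 : e 0 = 0) (heN : e (Fin.last (N + 1)) = 0)
    (hrel : ∀ j : Fin (N + 1), Polynomial.derivative (h j) = e j.castSucc - e j.succ)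
    (u : Fin (N + 1) → Fin N → ℝ) (v : Fin N → Fin (N + 1) → ℝ) :
    ∀ x y : ℝ,
      (∑ i : Fin (N + 1), ∑ j : Fin N,
          u i j * (Polynomial.derivative (h i)).eval x * (e j.succ.castSucc).eval y)
      + (∑ i : Fin N, ∑ j : Fin (N + 1),
          v i j * (e i.succ.castSucc).eval x * (Polynomial.derivative (h j)).eval y)
      = ∑ i : Fin N, ∑ j : Fin N,
          (u i.succ j - u i.castSucc j + (v i j.succ - v i j.castSucc))
            * (e i.succ.castSucc).eval x * (e j.succ.castSucc).eval y := by
  intro x y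
  set F : Fin (N + 2) → ℝ := fun i => (e i).eval x with hF
  set G : Fin (N + 2) → ℝ := fun i => (e i).eval y with hG
  have hF0 : F 0 = 0 := by simp [hF, he0]
  have hFN : F (Fin.last (N + 1)) = 0 := by simp [hF, heN]
  have hG0 : G 0 = 0 := by simp [hG, he0]
  have hGN : G (Fin.last (N + 1)) = 0 := by simp [hG, heN]
  have A : (∑ i : Fin (N + 1), ∑ j : Fin N,
      u i j * (Polynomial.derivative (h i)).eval x * (e j.succ.castSucc).eval y)
      = ∑ j : Fin N, ∑ i : Fin N,
        (u i.succ j - u i.castSucc j) * F i.succ.castSucc * G j.succ.castSucc := by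
    rw [Finset.sum_comm]
    refine Finset.sum_congr rfl fun j _ => ?_
    have := telescoping_key (fun i => u i j) F hF0 hFN
    calc ∑ i : Fin (N + 1), u i j * (Polynomial.derivative (h i)).eval x * (e j.succ.castSucc).eval y
        = (∑ i : Fin (N + 1), u i j * (F i.castSucc - F i.succ)) * G j.succ.castSucc := by
          rw [Finset.sum_mul]
          refine Finset.sum_congr rfl fun i _ => ?_
          rw [hrel i]; simp [hF, hG]
      _ = (∑ i : Fin N, (u i.succ j - u i.castSucc j) * F i.succ.castSucc) * G j.succ.castSucc := by
          rw [this]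
      _ = ∑ i : Fin N, (u i.succ j - u i.castSucc j) * F i.succ.castSucc * G j.succ.castSucc := by
          rw [Finset.sum_mul]
  have B : (∑ i : Fin N, ∑ j : Fin (N + 1),
      v i j * (e i.succ.castSucc).eval x * (Polynomial.derivative (h j)).eval y)
      = ∑ i : Fin N, ∑ j : Fin N,
        (v i j.succ - v i j.castSucc) * F i.succ.castSucc * G j.succ.castSucc := by
    refine Finset.sum_congr rfl fun i _ => ?_
    have := telescoping_key (fun j => v i j) G hG0 hGN
    calc ∑ j : Fin (N + 1), v i j * (e i.succ.castSucc).eval x * (Polynomial.derivative (h j)).eval y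
        = F i.succ.castSucc * ∑ j : Fin (N + 1), v i j * (G j.castSucc - G j.succ) := by
          rw [Finset.mul_sum]
          refine Finset.sum_congr rfl fun j _ => ?_
          rw [hrel j]; simp [hF, hG]; ring
      _ = F i.succ.castSucc * ∑ j : Fin N, (v i j.succ - v i j.castSucc) * G j.succ.castSucc := by
          rw [this]
      _ = ∑ j : Fin N, (v i j.succ - v i j.castSucc) * F i.succ.castSucc * G j.succ.castSucc := by
          rw [Finset.mul_sum]; refine Finset.sum_congr rfl fun j _ => ?_; ring
  rw [A, B, Finset.sum_comm (γ := Fin N)]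
  rw [← Finset.sum_add_distrib]
  refine Finset.sum_congr rfl fun i _ => ?_
  rw [← Finset.sum_add_distrib]
  refine Finset.sum_congr rfl fun j _ => ?_
  simp only [hF, hG]; ring
end

section
/- Let M⁰, M¹, M² be symmetric positive definite matrices, E ∈ ℝ^{n×m} (incidence matrix), and b ∈ ℝ^m (boundary data). Suppose q ∈ ℝ^m satisfies the Neumann system Eᵀ M² E q + M¹ q = b, and define φ := M² E q. Then φ satisfies the Dirichlet system E (M¹)⁻¹ Eᵀ φ + (M²)⁻¹ φ = E (M¹)⁻¹ b. -/
open Matrix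

/-- Discrete Dirichlet–Neumann equivalence: if `q` solves the Neumann system
`Eᵀ M² E q + M¹ q = b` and `φ := M² E q`, then `φ` solves the Dirichlet system
`E (M¹)⁻¹ Eᵀ φ + (M²)⁻¹ φ = E (M¹)⁻¹ b`. -/
theorem neumann_to_dirichlet (m n : ℕ)
    (M0 : Matrix (Fin n) (Fin n) ℝ)
    (M1 : Matrix (Fin m) (Fin m) ℝ) (M2 : Matrix (Fin n) (Fin n) ℝ)
    (hM0 : M0.PosDef) (hM1 : M1.PosDef) (hM2 : M2.PosDef)
    (E : Matrix (Fin n) (Fin m) ℝ) (b : Fin m → ℝ)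
    (q : Fin m → ℝ)
    (hq : (Eᵀ * M2 * E).mulVec q + M1.mulVec q = b)
    (φ : Fin n → ℝ) (hφ : φ = (M2 * E).mulVec q) :
    (E * M1⁻¹ * Eᵀ).mulVec φ + (M2⁻¹).mulVec φ = (E * M1⁻¹).mulVec b := by
  subst hφ
  have hd1 : IsUnit M1.det := isUnit_iff_ne_zero.mpr hM1.det_pos.ne'
  have hd2 : IsUnit M2.det := isUnit_iff_ne_zero.mpr hM2.det_pos.ne'
  have h2 : M2⁻¹ * (M2 * E) = E := by
    rw [← Matrix.mul_assoc, Matrix.nonsing_inv_mul _ hd2, Matrix.one_mul]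
  have h1 : M1⁻¹ * M1 = 1 := Matrix.nonsing_inv_mul _ hd1
  have hq' : (Eᵀ * M2 * E).mulVec q = b - M1.mulVec q := by
    rw [← hq]; ring_nf
  calc (E * M1⁻¹ * Eᵀ).mulVec ((M2 * E).mulVec q) + (M2⁻¹).mulVec ((M2 * E).mulVec q)
      = (E * M1⁻¹).mulVec ((Eᵀ * M2 * E).mulVec q) + E.mulVec q := by
        rw [Matrix.mulVec_mulVec, Matrix.mulVec_mulVec, Matrix.mulVec_mulVec, h2]
        simp [Matrix.mul_assoc]
    _ = (E * M1⁻¹).mulVec b := by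
        rw [hq', Matrix.mulVec_sub, Matrix.mulVec_mulVec, Matrix.mul_assoc, h1,
          Matrix.mul_one]
        abel
end
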